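/- Let R be a Γ-graded integral domain and ⋆ a homogeneous star operation on R. Then the finite-type star operation associated to e(⋆) agrees with the finite-type homogeneous star operation ⋆_f on homogeneous fractional ideals: for every nonzero homogeneous fractional ideal A of R, A^{(e(⋆))_f} = A^{⋆_f}, where A^{⋆_f} = ⋃ { B^⋆ : B ⊆ A finitely generated homogeneous } and A^{(e(⋆))_f} = ⋃ { B^{e(⋆)} : B ⊆ A finitely generated }. -/

import Mathlib

open FractionalIdeal
open scoped Classical

section Setup

variable {Γ : Type*} [AddCommMonoid Γ] [LinearOrder Γ] [IsOrderedCancelAddMonoid Γ] [DecidableEq Γ]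
  {R : Type*} [CommRing R] [IsDomain R]
  (𝒜 : Γ → AddSubgroup R) [GradedRing 𝒜]
  (K : Type*) [Field K] [Algebra R K] [IsFractionRing R K]

/-- The integral ideal corresponding to a fractional ideal contained in `R`. -/
def idealOf (J : FractionalIdeal (nonZeroDivisors R) K) : Ideal R :=
  (J : Submodule R K).comap (Algebra.linearMap R K)

/-- An integral ideal is homogeneous if it contains all homogeneous components of its elements. -/
def IsHomIdeal (I : Ideal R) : Prop := ∀ f ∈ I, ∀ γ : Γ, GradedRing.proj 𝒜 γ f ∈ I

/-- `C(I)`: the homogeneous ideal generated by the homogeneous components of elements of `I`. -/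
def homC (I : Ideal R) : Ideal R :=
  Ideal.span {x | ∃ f ∈ I, ∃ γ : Γ, x = GradedRing.proj 𝒜 γ f}

/-- `C(J)` for a fractional ideal `J ⊆ R`, as a fractional ideal. -/
def Cfrac (J : FractionalIdeal (nonZeroDivisors R) K) : FractionalIdeal (nonZeroDivisors R) K :=
  ↑(homC 𝒜 (idealOf K J))

/-- A fractional ideal is homogeneous if some nonzero homogeneous `s ∈ R` multiplies it into a
homogeneous integral ideal. -/
def IsHomFrac (A : FractionalIdeal (nonZeroDivisors R) K) : Prop :=
  ∃ s : R, s ≠ 0 ∧ SetLike.IsHomogeneousElem 𝒜 s ∧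
    spanSingleton (nonZeroDivisors R) (algebraMap R K s) * A ≤ 1 ∧
    IsHomIdeal 𝒜 (idealOf K (spanSingleton (nonZeroDivisors R) (algebraMap R K s) * A))

/-- A homogeneous element of the homogeneous quotient field, viewed inside `K`. -/
def IsHomElem (x : K) : Prop :=
  ∃ a b : R, SetLike.IsHomogeneousElem 𝒜 a ∧ SetLike.IsHomogeneousElem 𝒜 b ∧ b ≠ 0 ∧
    x * algebraMap R K b = algebraMap R K a

end Setup

/-- A homogeneous star operation on the graded domain `R`. -/
structure HomStarOp {Γ : Type*} [AddCommMonoid Γ] [LinearOrder Γ] [IsOrderedCancelAddMonoid Γ] [DecidableEq Γ]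
    {R : Type*} [CommRing R] [IsDomain R] (𝒜 : Γ → AddSubgroup R) [GradedRing 𝒜]
    (K : Type*) [Field K] [Algebra R K] [IsFractionRing R K] where
  toFun : FractionalIdeal (nonZeroDivisors R) K → FractionalIdeal (nonZeroDivisors R) K
  hom : ∀ A, A ≠ 0 → IsHomFrac 𝒜 K A → IsHomFrac 𝒜 K (toFun A)
  map_span : ∀ x : K, x ≠ 0 → IsHomElem 𝒜 K x →
    toFun (spanSingleton (nonZeroDivisors R) x) = spanSingleton (nonZeroDivisors R) x
  map_smul : ∀ x : K, x ≠ 0 → IsHomElem 𝒜 K x → ∀ A, A ≠ 0 → IsHomFrac 𝒜 K A →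
    toFun (spanSingleton (nonZeroDivisors R) x * A) = spanSingleton (nonZeroDivisors R) x * toFun A
  le_star : ∀ A, A ≠ 0 → IsHomFrac 𝒜 K A → A ≤ toFun A
  mono : ∀ A B, A ≠ 0 → B ≠ 0 → IsHomFrac 𝒜 K A → IsHomFrac 𝒜 K B → A ≤ B → toFun A ≤ toFun B
  idem : ∀ A, A ≠ 0 → IsHomFrac 𝒜 K A → toFun (toFun A) = toFun A

/-- A classical star operation on the domain `R`. -/
structure StarOp (R : Type*) [CommRing R] [IsDomain R]
    (K : Type*) [Field K] [Algebra R K] [IsFractionRing R K] where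
  toFun : FractionalIdeal (nonZeroDivisors R) K → FractionalIdeal (nonZeroDivisors R) K
  map_span : ∀ x : K, x ≠ 0 →
    toFun (spanSingleton (nonZeroDivisors R) x) = spanSingleton (nonZeroDivisors R) x
  map_smul : ∀ x : K, x ≠ 0 → ∀ A, A ≠ 0 →
    toFun (spanSingleton (nonZeroDivisors R) x * A) = spanSingleton (nonZeroDivisors R) x * toFun A
  le_star : ∀ A, A ≠ 0 → A ≤ toFun A
  mono : ∀ A B, A ≠ 0 → B ≠ 0 → A ≤ B → toFun A ≤ toFun B
  idem : ∀ A, A ≠ 0 → toFun (toFun A) = toFun A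

section EStar

variable {Γ : Type*} [AddCommMonoid Γ] [LinearOrder Γ] [IsOrderedCancelAddMonoid Γ] [DecidableEq Γ]
  {R : Type*} [CommRing R] [IsDomain R]
  (𝒜 : Γ → AddSubgroup R) [GradedRing 𝒜]
  (K : Type*) [Field K] [Algebra R K] [IsFractionRing R K]

/-- The submodule `⋂ { z⁻¹ (C(zA))^⋆ : 0 ≠ z ∈ (R : A) }`. -/
def eStarSub (s : HomStarOp 𝒜 K) (A : FractionalIdeal (nonZeroDivisors R) K) : Submodule R K :=
  ⨅ z ∈ {z : K | z ≠ 0 ∧ spanSingleton (nonZeroDivisors R) z * A ≤ 1},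
    ↑(spanSingleton (nonZeroDivisors R) z⁻¹ *
      s.toFun (Cfrac 𝒜 K (spanSingleton (nonZeroDivisors R) z * A)))

/-- The extension `e(⋆)` of a homogeneous star operation `⋆`,
`A^{e(⋆)} := ⋂ { z⁻¹ (C(zA))^⋆ : 0 ≠ z ∈ (R : A) }` (which is a fractional ideal whenever
`A` is a nonzero fractional ideal). -/
noncomputable def eStar (s : HomStarOp 𝒜 K) (A : FractionalIdeal (nonZeroDivisors R) K) :
    FractionalIdeal (nonZeroDivisors R) K :=
  if h : IsFractional (nonZeroDivisors R) (eStarSub 𝒜 K s A) then ⟨_, h⟩ else 0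

end EStar


/-- `A^{★_f}` as a set: the union of `B^★` over finitely generated `B ⊆ A`. -/
def finTypeSet {R : Type*} [CommRing R] [IsDomain R]
    (K : Type*) [Field K] [Algebra R K] [IsFractionRing R K]
    (t : FractionalIdeal (nonZeroDivisors R) K → FractionalIdeal (nonZeroDivisors R) K)
    (A : FractionalIdeal (nonZeroDivisors R) K) : Set K :=
  ⋃ B ∈ {B : FractionalIdeal (nonZeroDivisors R) K |
      B ≠ 0 ∧ B ≤ A ∧ (B : Submodule R K).FG}, {x : K | x ∈ t B}

/-- `A^{⋆_f}` as a set: the union of `B^⋆` over finitely generated homogeneous `B ⊆ A`. -/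
def homFinTypeSet {Γ : Type*} [AddCommMonoid Γ] [LinearOrder Γ] [IsOrderedCancelAddMonoid Γ] [DecidableEq Γ]
    {R : Type*} [CommRing R] [IsDomain R]
    (𝒜 : Γ → AddSubgroup R) [GradedRing 𝒜]
    (K : Type*) [Field K] [Algebra R K] [IsFractionRing R K]
    (t : FractionalIdeal (nonZeroDivisors R) K → FractionalIdeal (nonZeroDivisors R) K)
    (A : FractionalIdeal (nonZeroDivisors R) K) : Set K :=
  ⋃ B ∈ {B : FractionalIdeal (nonZeroDivisors R) K |
      B ≠ 0 ∧ B ≤ A ∧ IsHomFrac 𝒜 K B ∧ (B : Submodule R K).FG}, {x : K | x ∈ t B}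

/-!
For a nonzero homogeneous `B` we have `B^⋆ ⊆ B^{e(⋆)}`: if `zB ⊆ R`, write `z = Σ_γ f_γ / b`,
where `b ∈ B` is a nonzero homogeneous element and `f = z b ∈ R`. Each summand is homogeneous
and moves `B` into `C(zB)`, because the ideal of elements of `R` multiplying one homogeneous
ideal into another is homogeneous; hence `z B^⋆ ⊆ C(zB)^⋆`.
Conversely, if `A = t⁻¹ I` with `t` homogeneous and `I` a homogeneous ideal, then a finitely
generated `B ⊆ A` lies in the finitely generated homogeneous `t⁻¹ C(tB) ⊆ A`, whose `⋆`-closure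
contains `B^{e(⋆)}` by the very definition of `e(⋆)` with `z = t`.
-/

open scoped nonZeroDivisors

section GradedIdeal

variable {ι A σ : Type*} [CommRing A] [DecidableEq ι] [AddMonoid ι]
  [SetLike σ A] [AddSubmonoidClass σ A] {𝒜 : ι → σ} [GradedRing 𝒜]

theorem Ideal.IsHomogeneous.exists_isHomogeneousElem_ne_zero {I : Ideal A}
    (hI : I.IsHomogeneous 𝒜) (hI0 : I ≠ ⊥) :
    ∃ b ∈ I, b ≠ 0 ∧ SetLike.IsHomogeneousElem 𝒜 b := by
  obtain ⟨y, hyI, hy0⟩ := Submodule.exists_mem_ne_zero_of_ne_bot hI0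
  obtain ⟨i, hi⟩ : (DirectSum.decompose 𝒜 y).support.Nonempty := by
    rw [Finset.nonempty_iff_ne_empty]
    intro h
    rw [← DirectSum.sum_support_decompose 𝒜 y, h, Finset.sum_empty] at hy0
    exact hy0 rfl
  exact ⟨_, hI i hyI, by simpa using hi, ⟨i, (DirectSum.decompose 𝒜 y i).2⟩⟩

theorem Ideal.IsHomogeneous.colon [IsRightCancelAdd ι] {I L : Ideal A}
    (hL : L.IsHomogeneous 𝒜) (hI : I.IsHomogeneous 𝒜) :
    (L.colon (I : Set A)).IsHomogeneous 𝒜 := by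
  let _ : AddRightCancelMonoid ι := { ‹AddMonoid ι›, ‹IsRightCancelAdd ι› with }
  intro γ f hf
  rw [Submodule.mem_colon] at hf ⊢
  intro y hy
  rw [← DirectSum.sum_support_decompose 𝒜 y, Finset.smul_sum]
  refine Ideal.sum_mem _ fun η _ => ?_
  rw [smul_eq_mul,
    ← DirectSum.coe_decompose_mul_add_of_right_mem 𝒜 (DirectSum.decompose 𝒜 y η).2]
  exact hL _ (hf _ (hI η hy))

end GradedIdeal

section HomogeneousHull

variable {Γ : Type*} [AddCommMonoid Γ] [DecidableEq Γ]
  {R : Type*} [CommRing R] {𝒜 : Γ → AddSubgroup R} [GradedRing 𝒜]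

theorem isHomIdeal_iff {I : Ideal R} : IsHomIdeal 𝒜 I ↔ I.IsHomogeneous 𝒜 :=
  ⟨fun h γ _ hr => h _ hr γ, fun h _ hr γ => h γ hr⟩

theorem homC_eq_homogeneousHull (I : Ideal R) : homC 𝒜 I = (I.homogeneousHull 𝒜).toIdeal := by
  unfold homC Ideal.homogeneousHull
  congr 1
  ext x
  constructor
  · rintro ⟨f, hf, γ, rfl⟩
    exact ⟨γ, ⟨f, hf⟩, rfl⟩
  · rintro ⟨γ, ⟨f, hf⟩, rfl⟩
    exact ⟨f, hf, γ, rfl⟩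

theorem le_homC (I : Ideal R) : I ≤ homC 𝒜 I := by
  rw [homC_eq_homogeneousHull]
  exact Ideal.le_toIdeal_homogeneousHull 𝒜 I

theorem isHomogeneous_homC (I : Ideal R) : (homC 𝒜 I).IsHomogeneous 𝒜 := by
  rw [homC_eq_homogeneousHull]
  exact (I.homogeneousHull 𝒜).isHomogeneous

theorem homC_le {I J : Ideal R} (hIJ : I ≤ J) (hJ : J.IsHomogeneous 𝒜) : homC 𝒜 I ≤ J := by
  rw [homC_eq_homogeneousHull, ← hJ.toIdeal_homogeneousHull_eq_self]
  exact Ideal.homogeneousHull_mono 𝒜 hIJ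

/-- `C(I)` is generated by the homogeneous components of the generators of `I`. -/
theorem homC_fg {I : Ideal R} (hI : I.FG) : (homC 𝒜 I).FG := by
  obtain ⟨T, rfl⟩ := hI
  let S : Finset R :=
    T.biUnion fun t => (DirectSum.decompose 𝒜 t).support.image fun γ => DirectSum.decompose 𝒜 t γ
  suffices homC 𝒜 (Ideal.span T) = Ideal.span S from this ▸ ⟨S, rfl⟩
  refine le_antisymm (homC_le (Ideal.span_le.2 fun t ht => ?_) ?_) (Ideal.span_le.2 ?_)
  · rw [← DirectSum.sum_support_decompose 𝒜 t]
    exact Ideal.sum_mem _ fun γ hγ =>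
      Ideal.subset_span (Finset.mem_biUnion.2 ⟨t, ht, Finset.mem_image_of_mem _ hγ⟩)
  · refine Ideal.homogeneous_span 𝒜 _ fun x hx => ?_
    obtain ⟨t, -, hx⟩ := Finset.mem_biUnion.1 hx
    obtain ⟨γ, -, rfl⟩ := Finset.mem_image.1 hx
    exact ⟨γ, (DirectSum.decompose 𝒜 t γ).2⟩
  · intro x hx
    obtain ⟨t, ht, hx⟩ := Finset.mem_biUnion.1 (Finset.mem_coe.1 hx)
    obtain ⟨γ, -, rfl⟩ := Finset.mem_image.1 hx
    exact isHomogeneous_homC _ γ (le_homC _ (Ideal.subset_span ht))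

end HomogeneousHull

section FractionalIdeal

variable {R : Type*} [CommRing R] {K : Type*} [Field K] [Algebra R K]
  [IsFractionRing R K]

theorem idealOf_coeIdeal (I : Ideal R) : idealOf K (I : FractionalIdeal R⁰ K) = I :=
  Submodule.comap_map_eq_of_injective (IsFractionRing.injective R K) I

theorem FractionalIdeal.spanSingleton_inv_mul_spanSingleton_mul {x : K} (hx : x ≠ 0)
    (J : FractionalIdeal R⁰ K) : spanSingleton R⁰ x⁻¹ * (spanSingleton R⁰ x * J) = J := by
  rw [← mul_assoc, spanSingleton_mul_spanSingleton, inv_mul_cancel₀ hx, spanSingleton_one,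
    one_mul]

theorem FractionalIdeal.spanSingleton_mul_ne_zero {x : K} (hx : x ≠ 0)
    {J : FractionalIdeal R⁰ K} (hJ : J ≠ 0) : spanSingleton R⁰ x * J ≠ 0 := by
  intro h
  rw [← spanSingleton_inv_mul_spanSingleton_mul hx J, h, mul_zero] at hJ
  exact hJ rfl

theorem FractionalIdeal.fg_spanSingleton_mul (x : K) {J : FractionalIdeal R⁰ K}
    (hJ : (J : Submodule R K).FG) : ((spanSingleton R⁰ x * J : FractionalIdeal R⁰ K) :
      Submodule R K).FG := by
  rw [coe_mul, coe_spanSingleton]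
  exact (Submodule.fg_span_singleton x).mul hJ

end FractionalIdeal

theorem isHomElem_div {Γ R K : Type*} [CommRing R] [Field K] [Algebra R K] [IsFractionRing R K]
    {𝒜 : Γ → AddSubgroup R} {a b : R} (ha : SetLike.IsHomogeneousElem 𝒜 a)
    (hb : SetLike.IsHomogeneousElem 𝒜 b) (hb0 : b ≠ 0) :
    IsHomElem 𝒜 K (algebraMap R K a / algebraMap R K b) :=
  ⟨a, b, ha, hb, hb0, div_mul_cancel₀ _ ((map_ne_zero_iff _ (IsFractionRing.injective R K)).2 hb0)⟩

section HomogeneousFractionalIdeal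

variable {Γ : Type*} [AddCommMonoid Γ] [DecidableEq Γ]
  {R : Type*} [CommRing R] {𝒜 : Γ → AddSubgroup R} [GradedRing 𝒜]
  {K : Type*} [Field K] [Algebra R K] [IsFractionRing R K]

theorem isHomFrac_iff {B : FractionalIdeal R⁰ K} :
    IsHomFrac 𝒜 K B ↔ ∃ (t : R) (I : Ideal R), t ≠ 0 ∧ SetLike.IsHomogeneousElem 𝒜 t ∧
      I.IsHomogeneous 𝒜 ∧ spanSingleton R⁰ (algebraMap R K t) * B = I := by
  constructor
  · rintro ⟨t, ht0, htH, htB, hI⟩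
    obtain ⟨I, hIB⟩ := le_one_iff_exists_coeIdeal.1 htB
    rw [← hIB, idealOf_coeIdeal] at hI
    exact ⟨t, I, ht0, htH, isHomIdeal_iff.1 hI, hIB.symm⟩
  · rintro ⟨t, I, ht0, htH, hI, hIB⟩
    refine ⟨t, ht0, htH, hIB ▸ coeIdeal_le_one, ?_⟩
    rw [hIB, idealOf_coeIdeal]
    exact isHomIdeal_iff.2 hI

theorem IsHomFrac.exists_eq_spanSingleton_inv_mul {B : FractionalIdeal R⁰ K}
    (hB : IsHomFrac 𝒜 K B) : ∃ (t : R) (I : Ideal R), t ≠ 0 ∧ SetLike.IsHomogeneousElem 𝒜 t ∧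
      I.IsHomogeneous 𝒜 ∧ B = spanSingleton R⁰ (algebraMap R K t)⁻¹ * I := by
  obtain ⟨t, I, ht0, htH, hI, hIB⟩ := isHomFrac_iff.1 hB
  refine ⟨t, I, ht0, htH, hI, ?_⟩
  rw [← hIB, spanSingleton_inv_mul_spanSingleton_mul]
  exact (map_ne_zero_iff _ (IsFractionRing.injective R K)).2 ht0

theorem isHomFrac_coeIdeal [Nontrivial R] {I : Ideal R} (hI : I.IsHomogeneous 𝒜) :
    IsHomFrac 𝒜 K (I : FractionalIdeal R⁰ K) :=
  isHomFrac_iff.2 ⟨1, I, one_ne_zero, ⟨0, SetLike.one_mem_graded 𝒜⟩, hI, by simp⟩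

theorem IsHomFrac.spanSingleton_mul [IsDomain R] {x : K} (hx : IsHomElem 𝒜 K x)
    {B : FractionalIdeal R⁰ K} (hB : IsHomFrac 𝒜 K B) : IsHomFrac 𝒜 K (spanSingleton R⁰ x * B) := by
  obtain ⟨a, b, haH, hbH, hb0, hxb⟩ := hx
  obtain ⟨t, I, ht0, htH, hI, htB⟩ := isHomFrac_iff.1 hB
  refine isHomFrac_iff.2 ⟨b * t, Ideal.span {a} * I, mul_ne_zero hb0 ht0, hbH.mul htH,
    (Ideal.homogeneous_span 𝒜 {a} (by simpa using haH)).mul hI, ?_⟩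
  rw [coeIdeal_mul, ← htB, coeIdeal_span_singleton, ← hxb, map_mul]
  simp only [← spanSingleton_mul_spanSingleton]
  ring

theorem isHomElem_algebraMap_inv {t : R} (ht : SetLike.IsHomogeneousElem 𝒜 t) (ht0 : t ≠ 0) :
    IsHomElem 𝒜 K (algebraMap R K t)⁻¹ := by
  simpa using isHomElem_div (K := K) ⟨0, SetLike.one_mem_graded 𝒜⟩ ht ht0

end HomogeneousFractionalIdeal

section EStar

variable {Γ : Type*} [AddCommMonoid Γ] [LinearOrder Γ] [IsOrderedCancelAddMonoid Γ] [DecidableEq Γ]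
  {R : Type*} [CommRing R] [IsDomain R] {𝒜 : Γ → AddSubgroup R} [GradedRing 𝒜]
  {K : Type*} [Field K] [Algebra R K] [IsFractionRing R K]
  (s : HomStarOp 𝒜 K) {B : FractionalIdeal R⁰ K} {z : K}

theorem eStarSub_le (hz : z ≠ 0) (hzB : spanSingleton R⁰ z * B ≤ 1) :
    eStarSub 𝒜 K s B ≤ ((spanSingleton R⁰ z⁻¹ *
      s.toFun (Cfrac 𝒜 K (spanSingleton R⁰ z * B)) : FractionalIdeal R⁰ K) : Submodule R K) := by
  unfold eStarSub
  exact iInf₂_le z ⟨hz, hzB⟩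

theorem coe_eStar (hz : z ≠ 0) (hzB : spanSingleton R⁰ z * B ≤ 1) :
    (eStar 𝒜 K s B : Submodule R K) = eStarSub 𝒜 K s B := by
  have hfrac := isFractional_of_le (eStarSub_le s hz hzB)
  have : eStar 𝒜 K s B = ⟨_, hfrac⟩ := dif_pos hfrac
  rw [this]
  rfl

theorem eStar_le (hz : z ≠ 0) (hzB : spanSingleton R⁰ z * B ≤ 1) :
    eStar 𝒜 K s B ≤ spanSingleton R⁰ z⁻¹ * s.toFun (Cfrac 𝒜 K (spanSingleton R⁰ z * B)) := by
  rw [← coe_le_coe, coe_eStar s hz hzB]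
  exact eStarSub_le s hz hzB

theorem le_eStar_of_forall_le {D : FractionalIdeal R⁰ K} (hz : z ≠ 0)
    (hzB : spanSingleton R⁰ z * B ≤ 1)
    (h : ∀ y : K, y ≠ 0 → spanSingleton R⁰ y * B ≤ 1 →
      D ≤ spanSingleton R⁰ y⁻¹ * s.toFun (Cfrac 𝒜 K (spanSingleton R⁰ y * B))) :
    D ≤ eStar 𝒜 K s B := by
  rw [← coe_le_coe, coe_eStar s hz hzB]
  exact le_iInf₂ fun y hy => coe_le_coe.2 (h y hy.1 hy.2)

theorem HomStarOp.spanSingleton_mul_le_of_le {x : K} (hx : IsHomElem 𝒜 K x)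
    {D E : FractionalIdeal R⁰ K} (hD0 : D ≠ 0) (hD : IsHomFrac 𝒜 K D) (hE0 : E ≠ 0)
    (hE : IsHomFrac 𝒜 K E) (h : spanSingleton R⁰ x * D ≤ E) :
    spanSingleton R⁰ x * s.toFun D ≤ s.toFun E := by
  rcases eq_or_ne x 0 with rfl | hx0
  · simp [spanSingleton_zero]
  rw [← s.map_smul x hx0 hx D hD0 hD]
  exact s.mono _ _ (spanSingleton_mul_ne_zero hx0 hD0) hE0 (hD.spanSingleton_mul hx) hE h

theorem HomStarOp.spanSingleton_mul_coeIdeal_le {I L : Ideal R} (hI : I.IsHomogeneous 𝒜)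
    (hI0 : I ≠ ⊥) {u : K} (hu : u ≠ 0)
    (hL : spanSingleton R⁰ u * (I : FractionalIdeal R⁰ K) = L) :
    spanSingleton R⁰ u * s.toFun I ≤ s.toFun (homC 𝒜 L) := by
  have hinj := IsFractionRing.injective R K
  obtain ⟨b, hbI, hb0, hbH⟩ := hI.exists_isHomogeneousElem_ne_zero hI0
  have hbK : algebraMap R K b ≠ 0 := (map_ne_zero_iff _ hinj).2 hb0
  have hmemL : ∀ y ∈ I, ∃ w ∈ L, algebraMap R K w = u * algebraMap R K y := fun y hy =>
    (mem_coeIdeal _).1 (hL ▸ mem_singleton_mul.2 ⟨_, mem_coeIdeal_of_mem _ hy, rfl⟩)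
  obtain ⟨f, -, hf⟩ := hmemL b hbI
  have hf_colon : f ∈ (Ideal.span {b} * homC 𝒜 L).colon (I : Set R) := by
    refine Submodule.mem_colon.2 fun y hy => ?_
    obtain ⟨w, hwL, hw⟩ := hmemL y hy
    have hfy : f * y = b * w := hinj (by simp only [map_mul, hf, hw]; ring)
    rw [smul_eq_mul, hfy]
    exact Ideal.mul_mem_mul (Ideal.mem_span_singleton_self b) (le_homC L hwL)
  have hcolon : ((Ideal.span {b} * homC 𝒜 L).colon (I : Set R)).IsHomogeneous 𝒜 :=
    ((Ideal.homogeneous_span 𝒜 {b} (by simpa using hbH)).mul (isHomogeneous_homC L)).colon hI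
  let v : Γ → K := fun γ => algebraMap R K (DirectSum.decompose 𝒜 f γ) / algebraMap R K b
  have hv : ∀ γ, spanSingleton R⁰ (v γ) * I ≤ homC 𝒜 L := by
    intro γ
    refine spanSingleton_mul_le_iff.2 fun _ hz => ?_
    obtain ⟨y, hy, rfl⟩ := (mem_coeIdeal _).1 hz
    obtain ⟨c, hc, hbc⟩ :=
      Ideal.mem_span_singleton_mul.1 (Submodule.mem_colon.1 (hcolon γ hf_colon) y hy)
    refine (mem_coeIdeal _).2 ⟨c, hc, ?_⟩
    rw [smul_eq_mul] at hbc
    rw [div_mul_eq_mul_div, eq_div_iff hbK, ← map_mul, ← map_mul, mul_comm, hbc]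
  have hsum : u = ∑ γ ∈ (DirectSum.decompose 𝒜 f).support, v γ := by
    rw [← Finset.sum_div, ← map_sum, DirectSum.sum_support_decompose, hf,
      mul_div_cancel_right₀ _ hbK]
  have hL0 : L ≠ ⊥ :=
    coeIdeal_ne_zero.1 (hL ▸ spanSingleton_mul_ne_zero hu (coeIdeal_ne_zero.2 hI0))
  refine spanSingleton_mul_le_iff.2 fun x hx => ?_
  rw [hsum, Finset.sum_mul]
  exact Submodule.sum_mem _ fun γ _ => s.spanSingleton_mul_le_of_le
    (isHomElem_div ⟨γ, (DirectSum.decompose 𝒜 f γ).2⟩ hbH hb0) (coeIdeal_ne_zero.2 hI0)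
    (isHomFrac_coeIdeal hI) (coeIdeal_ne_zero.2 (ne_bot_of_le_ne_bot hL0 (le_homC L)))
    (isHomFrac_coeIdeal (isHomogeneous_homC L)) (hv γ) (mem_singleton_mul.2 ⟨x, hx, rfl⟩)

theorem HomStarOp.spanSingleton_mul_le_Cfrac (hB0 : B ≠ 0) (hB : IsHomFrac 𝒜 K B) (hz : z ≠ 0)
    (hzB : spanSingleton R⁰ z * B ≤ 1) :
    spanSingleton R⁰ z * s.toFun B ≤ s.toFun (Cfrac 𝒜 K (spanSingleton R⁰ z * B)) := by
  obtain ⟨t, I, ht0, htH, hI, rfl⟩ := hB.exists_eq_spanSingleton_inv_mul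
  obtain ⟨L, hL⟩ := le_one_iff_exists_coeIdeal.1 hzB
  have htK : algebraMap R K t ≠ 0 := (map_ne_zero_iff _ (IsFractionRing.injective R K)).2 ht0
  have hI0 : (I : FractionalIdeal R⁰ K) ≠ 0 := right_ne_zero_of_mul hB0
  rw [← hL, Cfrac, idealOf_coeIdeal, s.map_smul _ (inv_ne_zero htK)
    (isHomElem_algebraMap_inv htH ht0) _ hI0 (isHomFrac_coeIdeal hI), ← mul_assoc,
    spanSingleton_mul_spanSingleton]
  rw [← mul_assoc, spanSingleton_mul_spanSingleton] at hL
  exact s.spanSingleton_mul_coeIdeal_le hI (coeIdeal_ne_zero.1 hI0)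
    (mul_ne_zero hz (inv_ne_zero htK)) hL.symm

theorem HomStarOp.le_eStar (hB0 : B ≠ 0) (hB : IsHomFrac 𝒜 K B) :
    s.toFun B ≤ eStar 𝒜 K s B := by
  have ⟨t, ht0, _, htB, _⟩ := hB
  refine le_eStar_of_forall_le s ((map_ne_zero_iff _ (IsFractionRing.injective R K)).2 ht0) htB
    fun y hy hyB x hx => mem_singleton_mul.2 ⟨y * x, ?_, by field_simp⟩
  exact s.spanSingleton_mul_le_Cfrac hB0 hB hy hyB (mem_singleton_mul.2 ⟨x, hx, rfl⟩)

theorem HomStarOp.exists_fg_isHomFrac_eStar_le {A : FractionalIdeal R⁰ K} (hA : IsHomFrac 𝒜 K A)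
    (hB0 : B ≠ 0) (hBA : B ≤ A) (hB : (B : Submodule R K).FG) :
    ∃ B' : FractionalIdeal R⁰ K, B' ≠ 0 ∧ B' ≤ A ∧ IsHomFrac 𝒜 K B' ∧
      (B' : Submodule R K).FG ∧ eStar 𝒜 K s B ≤ s.toFun B' := by
  have hinj := IsFractionRing.injective R K
  obtain ⟨t, I, ht0, htH, hI, hIA⟩ := isHomFrac_iff.1 hA
  set z := algebraMap R K t
  have hz : z ≠ 0 := (map_ne_zero_iff _ hinj).2 ht0
  have hzB : spanSingleton R⁰ z * B ≤ I := hIA ▸ mul_le_mul_right hBA _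
  obtain ⟨J, hJ⟩ := le_one_iff_exists_coeIdeal.1 (hzB.trans coeIdeal_le_one)
  have hJ0 : J ≠ ⊥ := coeIdeal_ne_zero.1 (hJ ▸ spanSingleton_mul_ne_zero hz hB0)
  have hJfg : J.FG := (coeIdeal_fg _ hinj J).1 (hJ ▸ fg_spanSingleton_mul z hB)
  have hC0 : (homC 𝒜 J : FractionalIdeal R⁰ K) ≠ 0 :=
    coeIdeal_ne_zero.2 (ne_bot_of_le_ne_bot hJ0 (le_homC J))
  have hCI : (homC 𝒜 J : FractionalIdeal R⁰ K) ≤ I :=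
    (coeIdeal_le_coeIdeal K).2 (homC_le ((coeIdeal_le_coeIdeal K).1 (hJ ▸ hzB)) hI)
  have hCA : spanSingleton R⁰ z⁻¹ * (homC 𝒜 J : FractionalIdeal R⁰ K) ≤ A := by
    rw [← spanSingleton_inv_mul_spanSingleton_mul hz A, hIA]
    exact mul_le_mul_right hCI _
  have hzinv := isHomElem_algebraMap_inv (K := K) htH ht0
  have hChom := isHomFrac_coeIdeal (K := K) (isHomogeneous_homC (𝒜 := 𝒜) J)
  refine ⟨_, spanSingleton_mul_ne_zero (inv_ne_zero hz) hC0, hCA, hChom.spanSingleton_mul hzinv,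
    fg_spanSingleton_mul _ ((coeIdeal_fg _ hinj _).2 (homC_fg hJfg)), ?_⟩
  rw [s.map_smul _ (inv_ne_zero hz) hzinv _ hC0 hChom, ← idealOf_coeIdeal (K := K) J, ← Cfrac, hJ]
  exact eStar_le s hz (hzB.trans coeIdeal_le_one)

end EStar

theorem stmt_6_general
    {Γ : Type*} [AddCommMonoid Γ] [LinearOrder Γ] [IsOrderedCancelAddMonoid Γ] [DecidableEq Γ]
    {R : Type*} [CommRing R] [IsDomain R]
    (𝒜 : Γ → AddSubgroup R) [GradedRing 𝒜]
    (K : Type*) [Field K] [Algebra R K] [IsFractionRing R K]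
    (s : HomStarOp 𝒜 K) (A : FractionalIdeal (nonZeroDivisors R) K)
    (hhom : IsHomFrac 𝒜 K A) :
    finTypeSet K (eStar 𝒜 K s) A = homFinTypeSet 𝒜 K s.toFun A := by
  ext x
  simp only [finTypeSet, homFinTypeSet, Set.mem_iUnion, Set.mem_ofPred_eq, exists_prop]
  constructor
  · rintro ⟨B, ⟨hB0, hBA, hBfg⟩, hx⟩
    obtain ⟨B', hB'0, hB'A, hB'hom, hB'fg, hle⟩ :=
      s.exists_fg_isHomFrac_eStar_le hhom hB0 hBA hBfg
    exact ⟨B', ⟨hB'0, hB'A, hB'hom, hB'fg⟩, hle hx⟩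
  · rintro ⟨B, ⟨hB0, hBA, hBhom, hBfg⟩, hx⟩
    exact ⟨B, ⟨hB0, hBA, hBfg⟩, s.le_eStar hB0 hBhom hx⟩

/-- `(e(⋆))_f` agrees with `⋆_f` on nonzero homogeneous fractional ideals. -/
theorem stmt_6
    {Γ : Type*} [AddCommMonoid Γ] [LinearOrder Γ] [IsOrderedCancelAddMonoid Γ] [DecidableEq Γ]
    {R : Type*} [CommRing R] [IsDomain R]
    (𝒜 : Γ → AddSubgroup R) [GradedRing 𝒜]
    (K : Type*) [Field K] [Algebra R K] [IsFractionRing R K]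
    (s : HomStarOp 𝒜 K) (A : FractionalIdeal (nonZeroDivisors R) K)
    (hA : A ≠ 0) (hhom : IsHomFrac 𝒜 K A) :
    finTypeSet K (eStar 𝒜 K s) A = homFinTypeSet 𝒜 K s.toFun A :=
  stmt_6_general 𝒜 K s A hhom
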